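/- arXiv:1411.6265 — 2 statements merged into one kernel-verified Lean document; each statement's English description precedes it below -/
import Mathlib

section
/- For all complex-relevant reals a, b, c, g ∈ ℝ, one has |e^{(a+bi)g} − e^{cig}| ≤ (|b − c| + |a|) · e^{|ga|} · |g|, where the modulus is taken in ℂ. -/
open Complex

namespace Complex

/-- Mean value inequality: on the segment from `w` to `z`, which stays in the half-plane
`re ≤ K`, the derivative of `exp` has norm `Real.exp re ≤ Real.exp K`. -/
theorem norm_exp_sub_exp_le_of_re_le {z w : ℂ} {K : ℝ} (hz : z.re ≤ K) (hw : w.re ≤ K) :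
    ‖exp z - exp w‖ ≤ Real.exp K * ‖z - w‖ := by
  have hconv : Convex ℝ {x : ℂ | x.re ≤ K} := convex_halfSpace_le reLm.isLinear K
  have hseg : segment ℝ w z ⊆ {x : ℂ | x.re ≤ K} := hconv.segment_subset hw hz
  refine (convex_segment w z).norm_image_sub_le_of_norm_deriv_le
    (fun x _ => differentiableAt_exp) (fun x hx => ?_)
    (left_mem_segment ℝ w z) (right_mem_segment ℝ w z)
  rw [deriv_exp, norm_exp]
  exact Real.exp_le_exp.2 (hseg hx)

end Complex

theorem stmt_9 (a b c g : ℝ) :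
    ‖Complex.exp ((a + b * I) * g) - Complex.exp (c * I * g)‖ ≤
      (|b - c| + |a|) * Real.exp |g * a| * |g| := by
  have hz : ((a + b * I) * g).re ≤ |g * a| := by
    simpa [mul_comm] using le_abs_self (g * a)
  have hw : (c * I * g).re ≤ |g * a| := by simpa using abs_nonneg (g * a)
  have hdist : ‖(a + b * I) * g - c * I * g‖ ≤ (|b - c| + |a|) * |g| := by
    refine (norm_le_abs_re_add_abs_im _).trans_eq ?_
    have hre : ((a + b * I) * g - c * I * g).re = a * g := by simp
    have him : ((a + b * I) * g - c * I * g).im = (b - c) * g := by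
      simp only [sub_im, mul_im, add_re, ofReal_re, mul_re, I_re, mul_zero, ofReal_im, I_im,
        mul_one, sub_self, add_zero, add_im, zero_add]
      ring
    rw [hre, him, abs_mul, abs_mul]
    ring
  calc _ ≤ Real.exp |g * a| * ‖(a + b * I) * g - c * I * g‖ :=
        norm_exp_sub_exp_le_of_re_le hz hw
    _ ≤ Real.exp |g * a| * ((|b - c| + |a|) * |g|) := by gcongr
    _ = (|b - c| + |a|) * Real.exp |g * a| * |g| := by ring
end

section
/- Let f : [0,∞) → ℝ be convex and g : [0,∞) → ℝ be arbitrary. Let x₀ be a minimizer of f, let y₀ > 0 and 0 < ε < y₀. If 2·max_{v∈{0,−1,1}} |g(y₀+εv) − f(y₀+εv)| < min_{u∈{−1,1}} [g(y₀+εu) − g(y₀)], then |x₀ − y₀| ≤ ε. -/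
/-! Both neighbours `y₀ ± ε` beat `y₀` by more than twice the approximation error, so `f` itself
is strictly larger at `y₀ ± ε` than at `y₀`. A convex function does not exceed its value at `y`
anywhere between `y` and a minimiser, so the minimiser cannot lie beyond either neighbour. -/

theorem lt_of_abs_sub_add_abs_sub_lt {f g : ℝ → ℝ} {a b : ℝ}
    (h : |g a - f a| + |g b - f b| < g b - g a) : f a < f b := by
  linarith [le_abs_self (g b - f b), neg_abs_le (g a - f a)]

theorem ConvexOn.le_of_mem_segment_of_isMinOn {E : Type*} [AddCommGroup E] [Module ℝ E]
    {s : Set E} {f : E → ℝ} (hf : ConvexOn ℝ s f) {x₀ y z : E} (hx₀ : x₀ ∈ s) (hmin : IsMinOn f s x₀) (hy : y ∈ s)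
    (hz : z ∈ segment ℝ y x₀) : f z ≤ f y :=
  (hf.le_on_segment hy hx₀ hz).trans (max_le le_rfl (hmin hy))

theorem ConvexOn.abs_sub_le_of_lt_of_lt {s : Set ℝ} {f : ℝ → ℝ} (hf : ConvexOn ℝ s f)
    {x₀ y ε : ℝ} (hx₀ : x₀ ∈ s) (hmin : IsMinOn f s x₀) (hy : y ∈ s) (hε : 0 ≤ ε)
    (hleft : f y < f (y - ε)) (hright : f y < f (y + ε)) : |x₀ - y| ≤ ε := by
  rw [abs_le]
  constructor
  · by_contra! hlt
    have hz : y - ε ∈ segment ℝ y x₀ := by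
      rw [segment_symm, segment_eq_Icc (by linarith)]
      constructor <;> linarith
    exact (hf.le_of_mem_segment_of_isMinOn hx₀ hmin hy hz).not_gt hleft
  · by_contra! hlt
    have hz : y + ε ∈ segment ℝ y x₀ := by
      rw [segment_eq_Icc (by linarith)]
      constructor <;> linarith
    exact (hf.le_of_mem_segment_of_isMinOn hx₀ hmin hy hz).not_gt hright

theorem stmt_16_general (f g : ℝ → ℝ) (hf : ConvexOn ℝ (Set.Ici 0) f)
    (x₀ : ℝ) (hx₀ : x₀ ∈ Set.Ici (0 : ℝ)) (hmin : ∀ x ∈ Set.Ici (0 : ℝ), f x₀ ≤ f x)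
    (y₀ ε : ℝ) (hy₀ : 0 < y₀) (hε : 0 < ε)
    (h : 2 * max (|g y₀ - f y₀|)
          (max (|g (y₀ + ε) - f (y₀ + ε)|) (|g (y₀ - ε) - f (y₀ - ε)|)) <
        min (g (y₀ + ε) - g y₀) (g (y₀ - ε) - g y₀)) :
    |x₀ - y₀| ≤ ε := by
  set M := max (|g y₀ - f y₀|) (max (|g (y₀ + ε) - f (y₀ + ε)|) (|g (y₀ - ε) - f (y₀ - ε)|))
  have hM_mid : |g y₀ - f y₀| ≤ M := le_max_left _ _
  have hM_right : |g (y₀ + ε) - f (y₀ + ε)| ≤ M := (le_max_left _ _).trans (le_max_right _ _)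
  have hM_left : |g (y₀ - ε) - f (y₀ - ε)| ≤ M := (le_max_right _ _).trans (le_max_right _ _)
  have hright : f y₀ < f (y₀ + ε) := lt_of_abs_sub_add_abs_sub_lt (g := g) <| by
    linarith [min_le_left (g (y₀ + ε) - g y₀) (g (y₀ - ε) - g y₀)]
  have hleft : f y₀ < f (y₀ - ε) := lt_of_abs_sub_add_abs_sub_lt (g := g) <| by
    linarith [min_le_right (g (y₀ + ε) - g y₀) (g (y₀ - ε) - g y₀)]
  exact hf.abs_sub_le_of_lt_of_lt hx₀ (isMinOn_iff.mpr hmin) (Set.mem_Ici.mpr hy₀.le) hε.le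
    hleft hright

theorem stmt_16 (f g : ℝ → ℝ) (hf : ConvexOn ℝ (Set.Ici 0) f)
    (x₀ : ℝ) (hx₀ : x₀ ∈ Set.Ici (0 : ℝ)) (hmin : ∀ x ∈ Set.Ici (0 : ℝ), f x₀ ≤ f x)
    (y₀ ε : ℝ) (hy₀ : 0 < y₀) (hε : 0 < ε) (hεy : ε < y₀)
    (h : 2 * max (|g y₀ - f y₀|)
          (max (|g (y₀ + ε) - f (y₀ + ε)|) (|g (y₀ - ε) - f (y₀ - ε)|)) <
        min (g (y₀ + ε) - g y₀) (g (y₀ - ε) - g y₀)) :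
    |x₀ - y₀| ≤ ε :=
  stmt_16_general f g hf x₀ hx₀ hmin y₀ ε hy₀ hε h
end
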